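/- arXiv:2107.04395 — 2 statements merged into one kernel-verified Lean document; each statement's English description precedes it below -/
import Mathlib

section
/- Let φ, ψ : E → ℝ be twice continuously differentiable with ψ convex. If for all x ∈ E and all directions z ∈ E one has ⟨∇²φ(x)[z], z⟩ ≤ L⟨∇²ψ(x)[z], z⟩, then φ(x) − φ(y) − ⟨∇φ(y), x−y⟩ ≤ L·D_ψ(x,y) for all x, y ∈ E. -/
/-!
The function `L ψ - φ` has a positive semidefinite Hessian, so it lies above its tangent planes.
On the segment `t ↦ y + t (x - y)` this is the mean value theorem combined with the monotonicity
of the directional derivative `t ↦ ⟪∇(L ψ - φ)(y + t (x - y)), x - y⟫`, whose own derivative is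
the Hessian quadratic form.
-/

open InnerProductSpace

open scoped RealInnerProductSpace

theorem le_sub_of_hasDerivAt_of_monotone {g G : ℝ → ℝ} (hg : ∀ t, HasDerivAt g (G t) t)
    (hG : Monotone G) : G 0 ≤ g 1 - g 0 := by
  obtain ⟨c, hc, hslope⟩ := exists_hasDerivAt_eq_slope g G one_pos
    (fun t _ => (hg t).continuousAt.continuousWithinAt) (fun t _ => hg t)
  calc G 0 ≤ G c := hG hc.1.le
    _ = g 1 - g 0 := by rw [hslope, sub_zero, div_one]

theorem hasDerivAt_add_smul {F : Type*} [NormedAddCommGroup F] [NormedSpace ℝ F]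
    (y v : F) (t : ℝ) : HasDerivAt (fun s : ℝ => y + s • v) v t := by
  simpa using ((hasDerivAt_id t).smul_const v).const_add y

section Line

variable {E : Type*} [NormedAddCommGroup E] [InnerProductSpace ℝ E] {y v : E} {t : ℝ}

theorem HasGradientAt.hasDerivAt_comp_add_smul [CompleteSpace E] {f : E → ℝ} {f' : E}
    (hf : HasGradientAt f f' (y + t • v)) :
    HasDerivAt (fun s : ℝ => f (y + s • v)) ⟪f', v⟫ t := by
  have h := hf.hasFDerivAt.comp_hasDerivAt t (hasDerivAt_add_smul y v t)
  simp only [toDual_apply_apply] at h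
  exact h

theorem HasFDerivAt.hasDerivAt_inner_comp_add_smul {F : E → E} {F' : E →L[ℝ] E}
    (hF : HasFDerivAt F F' (y + t • v)) :
    HasDerivAt (fun s : ℝ => ⟪F (y + s • v), v⟫) ⟪F' v, v⟫ t := by
  simpa using (hF.comp_hasDerivAt t (hasDerivAt_add_smul y v t)).inner ℝ (hasDerivAt_const t v)

end Line

theorem inner_gradient_le_sub_of_inner_hessian_nonneg {E : Type*} [NormedAddCommGroup E]
    [InnerProductSpace ℝ E] [CompleteSpace E] {f : E → ℝ} {f' : E → E} {f'' : E → E →L[ℝ] E}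
    (hf : ∀ x, HasGradientAt f (f' x) x) (hf' : ∀ x, HasFDerivAt f' (f'' x) x)
    (hf'' : ∀ x z, 0 ≤ ⟪f'' x z, z⟫) (x y : E) : ⟪f' y, x - y⟫ ≤ f x - f y := by
  set v := x - y
  have hslope : Monotone fun t : ℝ => ⟪f' (y + t • v), v⟫ :=
    monotone_of_hasDerivAt_nonneg (fun t => (hf' _).hasDerivAt_inner_comp_add_smul)
      (fun t => hf'' _ v)
  simpa [v] using le_sub_of_hasDerivAt_of_monotone
    (fun t => (hf (y + t • v)).hasDerivAt_comp_add_smul) hslope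

theorem stmt6_general {E : Type*} [NormedAddCommGroup E] [InnerProductSpace ℝ E]
    [FiniteDimensional ℝ E]
    (φ ψ : E → ℝ) (φ' ψ' : E → E) (φ'' ψ'' : E → E →L[ℝ] E) (L : ℝ)
    (hφd : ∀ x, HasGradientAt φ (φ' x) x)
    (hψd : ∀ x, HasGradientAt ψ (ψ' x) x)
    (hφdd : ∀ x, HasFDerivAt φ' (φ'' x) x)
    (hψdd : ∀ x, HasFDerivAt ψ' (ψ'' x) x)
    (hhess : ∀ x z : E, (inner ℝ (φ'' x z) z : ℝ) ≤ L * (inner ℝ (ψ'' x z) z : ℝ)) :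
    ∀ x y : E, φ x - φ y - (inner ℝ (φ' y) (x - y) : ℝ) ≤
      L * (ψ x - ψ y - (inner ℝ (ψ' y) (x - y) : ℝ)) := by
  intro x y
  have hgrad : ∀ x, HasGradientAt (fun z => L * ψ z - φ z) (L • ψ' x - φ' x) x := fun x => by
    rw [hasGradientAt_iff_hasFDerivAt, map_sub, map_smul]
    exact ((hψd x).hasFDerivAt.const_mul L).sub (hφd x).hasFDerivAt
  have hhess' : ∀ x, HasFDerivAt (fun z => L • ψ' z - φ' z) (L • ψ'' x - φ'' x) x :=
    fun x => ((hψdd x).const_smul L).sub (hφdd x)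
  have hpsd : ∀ x z, 0 ≤ ⟪(L • ψ'' x - φ'' x) z, z⟫ := fun x z => by
    simpa [inner_sub_left, real_inner_smul_left] using hhess x z
  have htangent := inner_gradient_le_sub_of_inner_hessian_nonneg hgrad hhess' hpsd x y
  rw [inner_sub_left, real_inner_smul_left] at htangent
  linarith

theorem stmt6 {E : Type*} [NormedAddCommGroup E] [InnerProductSpace ℝ E]
    [FiniteDimensional ℝ E]
    (φ ψ : E → ℝ) (φ' ψ' : E → E) (φ'' ψ'' : E → E →L[ℝ] E) (L : ℝ)
    (hφsm : ContDiff ℝ 2 φ) (hψsm : ContDiff ℝ 2 ψ)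
    (hψconv : ConvexOn ℝ Set.univ ψ)
    (hφd : ∀ x, HasGradientAt φ (φ' x) x)
    (hψd : ∀ x, HasGradientAt ψ (ψ' x) x)
    (hφdd : ∀ x, HasFDerivAt φ' (φ'' x) x)
    (hψdd : ∀ x, HasFDerivAt ψ' (ψ'' x) x)
    (hhess : ∀ x z : E, (inner ℝ (φ'' x z) z : ℝ) ≤ L * (inner ℝ (ψ'' x z) z : ℝ)) :
    ∀ x y : E, φ x - φ y - (inner ℝ (φ' y) (x - y) : ℝ) ≤
      L * (ψ x - ψ y - (inner ℝ (ψ' y) (x - y) : ℝ)) :=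
  stmt6_general φ ψ φ' ψ' φ'' ψ'' L hφd hψd hφdd hψdd hhess
end

section
/- Let f(V) = (1/2)‖X − UV‖_F² + (λ/2)‖I_r − VVᵀ‖_F² and φ₂(V) = (6λ/4)‖V‖_F⁴ + (ε/2)‖V‖_F² with ε = max(‖UᵀU‖, 2λ). Then for all V, Z: ⟨∇²f(V)[Z], Z⟩ ≤ ⟨∇²φ₂(V)[Z], Z⟩ and ⟨∇²f(V)[Z], Z⟩ + ⟨∇²φ₂(V)[Z], Z⟩ ≥ 0. Consequently f is (1,1)-relative smooth to φ₂. -/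
/-!
In Gram form, `⟨∇²f(V)[Z], Z⟩ = ‖UZ‖² + λ‖VZᵀ + ZVᵀ‖² - 2λ⟨I - VVᵀ, ZZᵀ⟩`, and submultiplicativity
of the Frobenius norm bounds each quartic term by `‖V‖²‖Z‖²`; comparing with
`⟨∇²φ₂(V)[Z], Z⟩ = 6λ(‖V‖²‖Z‖² + 2⟨V, Z⟩²) + ε‖Z‖²` gives both Hessian inequalities.

Both `f` and `φ₂` are combinations of squares `β (M V) (M V)` of maps `M` that are quadratic along
lines, so along `V + tW` their Hessian forms are quadratic in `t`. Hence the identity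
`D(V + W, V) = ∫₀¹ (1 - t) ⟨∇²(V + tW)[W], W⟩ dt` may be evaluated by the two-point Gauss rule for
the weight `1 - t` (nodes `1/3 ± √2/6`, weights `1/4`), which is exact in that degree. The Bregman
divergences of `f` and `φ₂` are thus the same positive combination of Hessian forms, and the
pointwise inequalities transfer to them.
-/

open Matrix

/-- Frobenius inner product `⟨A, B⟩ = trace (Aᵀ B)`. -/
def finner {m n : ℕ} (A B : Matrix (Fin m) (Fin n) ℝ) : ℝ := (Aᵀ * B).trace

/-- Squared Frobenius norm. -/
def fnormsq {m n : ℕ} (A : Matrix (Fin m) (Fin n) ℝ) : ℝ := finner A A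

section Frobenius

variable {l m n : ℕ}

lemma finner_comm (A B : Matrix (Fin m) (Fin n) ℝ) : finner A B = finner B A := by
  rw [finner, finner, ← trace_transpose, transpose_mul, transpose_transpose]

@[simp] lemma finner_add_left (A B C : Matrix (Fin m) (Fin n) ℝ) :
    finner (A + B) C = finner A C + finner B C := by
  simp [finner, transpose_add, Matrix.add_mul]

@[simp] lemma finner_add_right (A B C : Matrix (Fin m) (Fin n) ℝ) :
    finner A (B + C) = finner A B + finner A C := by
  simp [finner, Matrix.mul_add]

@[simp] lemma finner_smul_left (c : ℝ) (A B : Matrix (Fin m) (Fin n) ℝ) :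
    finner (c • A) B = c * finner A B := by
  simp [finner]

@[simp] lemma finner_smul_right (c : ℝ) (A B : Matrix (Fin m) (Fin n) ℝ) :
    finner A (c • B) = c * finner A B := by
  simp [finner]

@[simp] lemma finner_neg_left (A B : Matrix (Fin m) (Fin n) ℝ) :
    finner (-A) B = -finner A B := by
  simp [finner]

@[simp] lemma finner_neg_right (A B : Matrix (Fin m) (Fin n) ℝ) :
    finner A (-B) = -finner A B := by
  simp [finner]

@[simp] lemma finner_sub_left (A B C : Matrix (Fin m) (Fin n) ℝ) :
    finner (A - B) C = finner A C - finner B C := by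
  simp [sub_eq_add_neg]

lemma finner_mul_left (A : Matrix (Fin l) (Fin m) ℝ) (B : Matrix (Fin m) (Fin n) ℝ)
    (C : Matrix (Fin l) (Fin n) ℝ) : finner (A * B) C = finner B (Aᵀ * C) := by
  simp [finner, transpose_mul, Matrix.mul_assoc]

lemma finner_mul_right (A : Matrix (Fin l) (Fin m) ℝ) (B : Matrix (Fin m) (Fin n) ℝ)
    (C : Matrix (Fin l) (Fin n) ℝ) : finner (A * B) C = finner A (C * Bᵀ) := by
  rw [finner, finner, transpose_mul, Matrix.mul_assoc, trace_mul_comm, Matrix.mul_assoc]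

lemma finner_transpose (A B : Matrix (Fin m) (Fin n) ℝ) : finner Aᵀ Bᵀ = finner A B := by
  rw [finner, transpose_transpose, trace_mul_comm]
  exact finner_comm B A

def frobeniusForm : LinearMap.BilinForm ℝ (Matrix (Fin m) (Fin n) ℝ) :=
  LinearMap.mk₂ ℝ finner finner_add_left finner_smul_left finner_add_right finner_smul_right

@[simp] lemma frobeniusForm_apply (A B : Matrix (Fin m) (Fin n) ℝ) :
    frobeniusForm A B = finner A B :=
  rfl

lemma fnormsq_add (A B : Matrix (Fin m) (Fin n) ℝ) :
    fnormsq (A + B) = fnormsq A + 2 * finner A B + fnormsq B := by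
  simp only [fnormsq, finner_add_left, finner_add_right, finner_comm B A]; ring

attribute [local instance] Matrix.frobeniusNormedAddCommGroup in
lemma fnormsq_eq_norm_sq (A : Matrix (Fin m) (Fin n) ℝ) : fnormsq A = ‖A‖ ^ 2 := by
  rw [frobenius_norm_def, ← Real.sqrt_eq_rpow, Real.sq_sqrt (by positivity), fnormsq, finner,
    ← vec_dotProduct_vec]
  simp [dotProduct, vec, Fintype.sum_prod_type, sq, Finset.sum_comm (γ := Fin n)]

lemma fnormsq_nonneg (A : Matrix (Fin m) (Fin n) ℝ) : 0 ≤ fnormsq A := by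
  rw [fnormsq_eq_norm_sq]; positivity

attribute [local instance] Matrix.frobeniusNormedAddCommGroup in
lemma fnormsq_mul_le (A : Matrix (Fin l) (Fin m) ℝ) (B : Matrix (Fin m) (Fin n) ℝ) :
    fnormsq (A * B) ≤ fnormsq A * fnormsq B := by
  simp only [fnormsq_eq_norm_sq, ← mul_pow]
  exact pow_le_pow_left₀ (norm_nonneg _) (frobenius_norm_mul A B) 2

lemma fnormsq_transpose (A : Matrix (Fin m) (Fin n) ℝ) : fnormsq Aᵀ = fnormsq A :=
  finner_transpose A A

lemma fnormsq_add_le (A B : Matrix (Fin m) (Fin n) ℝ) :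
    fnormsq (A + B) ≤ 2 * fnormsq A + 2 * fnormsq B := by
  have h₁ := fnormsq_add A B
  have h₂ := fnormsq_add A (-B)
  have h₃ := fnormsq_nonneg (A + -B)
  simp only [fnormsq, finner_neg_left, finner_neg_right, neg_neg] at h₁ h₂ h₃ ⊢
  linarith

end Frobenius

section Quadrature

variable {E : Type*} [AddCommGroup E] [Module ℝ E]

/-- The second derivative of `t ↦ β (M t) (M t)` for `M t = A + t • B + t ^ 2 • C`,
`β` symmetric. -/
def quadCurveSecondDeriv (β : LinearMap.BilinForm ℝ E) (A B C : E) (t : ℝ) : ℝ :=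
  2 * β (B + (2 * t) • C) (B + (2 * t) • C) + 4 * β (A + t • B + t ^ 2 • C) C

theorem bilinForm_bregman_eq_quadrature (β : LinearMap.BilinForm ℝ E)
    (hβ : ∀ x y, β x y = β y x) {t₁ t₂ : ℝ} (h₁ : t₁ + t₂ = 2 / 3) (h₂ : t₁ * t₂ = 1 / 18)
    (A B C : E) :
    β (A + B + C) (A + B + C) - β A A - 2 * β A B =
      (quadCurveSecondDeriv β A B C t₁ + quadCurveSecondDeriv β A B C t₂) / 4 := by
  simp only [quadCurveSecondDeriv, map_add, map_smul, LinearMap.add_apply, LinearMap.smul_apply,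
    smul_eq_mul, hβ B A, hβ C A, hβ C B]
  linear_combination (-3 * β B C - 3 * (t₁ + t₂ + 2 / 3) * β C C) * h₁ + 6 * β C C * h₂

end Quadrature

noncomputable section Objectives

variable {m n r : ℕ}

def penalizedLoss (U : Matrix (Fin m) (Fin r) ℝ) (X : Matrix (Fin m) (Fin n) ℝ) (lam : ℝ)
    (V : Matrix (Fin r) (Fin n) ℝ) : ℝ :=
  (1 / 2) * fnormsq (X - U * V) + lam / 2 * fnormsq ((1 : Matrix (Fin r) (Fin r) ℝ) - V * Vᵀ)

def penalizedLossGrad (U : Matrix (Fin m) (Fin r) ℝ) (X : Matrix (Fin m) (Fin n) ℝ) (lam : ℝ)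
    (V : Matrix (Fin r) (Fin n) ℝ) : Matrix (Fin r) (Fin n) ℝ :=
  Uᵀ * U * V - Uᵀ * X + (2 * lam) • (V * Vᵀ * V - V)

def penalizedLossHess (U : Matrix (Fin m) (Fin r) ℝ) (lam : ℝ)
    (V Z : Matrix (Fin r) (Fin n) ℝ) : Matrix (Fin r) (Fin n) ℝ :=
  Uᵀ * U * Z + (2 * lam) • (Z * Vᵀ * V + V * Zᵀ * V + V * Vᵀ * Z - Z)

def quarticKernel (lam eps : ℝ) (V : Matrix (Fin r) (Fin n) ℝ) : ℝ :=
  6 * lam / 4 * (fnormsq V) ^ 2 + eps / 2 * fnormsq V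

def quarticKernelGrad (lam eps : ℝ) (V : Matrix (Fin r) (Fin n) ℝ) :
    Matrix (Fin r) (Fin n) ℝ :=
  (6 * lam * fnormsq V) • V + eps • V

def quarticKernelHess (lam eps : ℝ) (V Z : Matrix (Fin r) (Fin n) ℝ) :
    Matrix (Fin r) (Fin n) ℝ :=
  (6 * lam) • (fnormsq V • Z + (2 * finner V Z) • V) + eps • Z

variable {U : Matrix (Fin m) (Fin r) ℝ} {lam eps : ℝ}

lemma finner_one_mul_transpose (Z : Matrix (Fin r) (Fin n) ℝ) :
    finner 1 (Z * Zᵀ) = fnormsq Z := by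
  rw [finner, transpose_one, Matrix.one_mul, trace_mul_comm]; rfl

lemma finner_mul_transpose_mul_transpose (V Z : Matrix (Fin r) (Fin n) ℝ) :
    finner (V * Vᵀ) (Z * Zᵀ) = fnormsq (Vᵀ * Z) := by
  rw [← finner_mul_right, Matrix.mul_assoc, finner_mul_left]; rfl

lemma finner_penalizedLossHess (V Z : Matrix (Fin r) (Fin n) ℝ) :
    finner (penalizedLossHess U lam V Z) Z = fnormsq (U * Z) + lam * fnormsq (V * Zᵀ + Z * Vᵀ)
      - 2 * lam * finner (1 - V * Vᵀ) (Z * Zᵀ) := by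
  have hU : finner (Uᵀ * U * Z) Z = fnormsq (U * Z) := by
    rw [Matrix.mul_assoc, finner_mul_left, transpose_transpose]; rfl
  have hsq : fnormsq (V * Zᵀ) = fnormsq (Z * Vᵀ) := by
    rw [← fnormsq_transpose, transpose_mul, transpose_transpose]
  simp only [penalizedLossHess, finner_add_left, finner_sub_left, finner_smul_left, hU,
    finner_mul_right _ V, finner_mul_right (V * Vᵀ), fnormsq_add, hsq, finner_one_mul_transpose,
    finner_mul_transpose_mul_transpose]
  unfold fnormsq
  ring

lemma finner_quarticKernelHess (V Z : Matrix (Fin r) (Fin n) ℝ) :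
    finner (quarticKernelHess lam eps V Z) Z =
      6 * lam * (fnormsq V * fnormsq Z + 2 * finner V Z ^ 2) + eps * fnormsq Z := by
  simp only [quarticKernelHess, finner_add_left, finner_smul_left]
  unfold fnormsq
  ring

lemma fnormsq_mul_le_of_dotProduct_le {s : ℝ}
    (hs : ∀ u : Fin r → ℝ, u ⬝ᵥ (Uᵀ * U).mulVec u ≤ s * (u ⬝ᵥ u))
    (Z : Matrix (Fin r) (Fin n) ℝ) :
    fnormsq (U * Z) ≤ s * fnormsq Z := by
  have hcol : ∀ j, (Uᵀ * U * Z)ᵀ j = (Uᵀ * U) *ᵥ Zᵀ j := fun j => by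
    ext i; simp [mul_apply, mulVec, dotProduct]
  calc fnormsq (U * Z) = ∑ j, Zᵀ j ⬝ᵥ (Uᵀ * U * Z)ᵀ j := by
        rw [fnormsq, finner_mul_left, ← Matrix.mul_assoc]; rfl
    _ ≤ ∑ j, s * (Zᵀ j ⬝ᵥ Zᵀ j) := Finset.sum_le_sum fun j _ => hcol j ▸ hs (Zᵀ j)
    _ = s * fnormsq Z := by rw [← Finset.mul_sum]; rfl

lemma finner_penalizedLossHess_le
    (hU : ∀ Z : Matrix (Fin r) (Fin n) ℝ, fnormsq (U * Z) ≤ eps * fnormsq Z) (hlam : 0 ≤ lam)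
    (V Z : Matrix (Fin r) (Fin n) ℝ) :
    finner (penalizedLossHess U lam V Z) Z ≤ finner (quarticKernelHess lam eps V Z) Z := by
  rw [finner_penalizedLossHess, finner_quarticKernelHess, finner_sub_left,
    finner_one_mul_transpose, finner_mul_transpose_mul_transpose]
  have hsym : fnormsq (V * Zᵀ + Z * Vᵀ) ≤ 4 * (fnormsq V * fnormsq Z) := by
    have h₁ := fnormsq_mul_le V Zᵀ
    have h₂ := fnormsq_mul_le Z Vᵀ
    rw [fnormsq_transpose] at h₁ h₂
    linarith [fnormsq_add_le (V * Zᵀ) (Z * Vᵀ)]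
  have hgram : fnormsq (Vᵀ * Z) ≤ fnormsq V * fnormsq Z := by
    simpa only [fnormsq_transpose] using fnormsq_mul_le Vᵀ Z
  nlinarith [hU Z, sq_nonneg (finner V Z), fnormsq_nonneg Z]

lemma finner_penalizedLossHess_add_quarticKernelHess_nonneg (hlam : 0 ≤ lam)
    (heps : 2 * lam ≤ eps) (V Z : Matrix (Fin r) (Fin n) ℝ) :
    0 ≤ finner (penalizedLossHess U lam V Z) Z + finner (quarticKernelHess lam eps V Z) Z := by
  have hZ := fnormsq_nonneg Z
  have hf : -(2 * lam * fnormsq Z) ≤ finner (penalizedLossHess U lam V Z) Z := by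
    rw [finner_penalizedLossHess, finner_sub_left, finner_one_mul_transpose,
      finner_mul_transpose_mul_transpose]
    nlinarith [fnormsq_nonneg (U * Z), fnormsq_nonneg (V * Zᵀ + Z * Vᵀ),
      fnormsq_nonneg (Vᵀ * Z)]
  have hφ : eps * fnormsq Z ≤ finner (quarticKernelHess lam eps V Z) Z := by
    rw [finner_quarticKernelHess]
    nlinarith [mul_nonneg (fnormsq_nonneg V) hZ, sq_nonneg (finner V Z)]
  nlinarith

lemma one_sub_mul_transpose_add_smul (V W : Matrix (Fin r) (Fin n) ℝ) (t : ℝ) :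
    1 - (V + t • W) * (V + t • W)ᵀ =
      (1 - V * Vᵀ) + t • -(V * Wᵀ + W * Vᵀ) + t ^ 2 • -(W * Wᵀ) := by
  simp only [transpose_add, transpose_smul, Matrix.add_mul, Matrix.mul_add, Matrix.smul_mul,
    Matrix.mul_smul]
  module

lemma finner_penalizedLossGrad (X : Matrix (Fin m) (Fin n) ℝ) (V W : Matrix (Fin r) (Fin n) ℝ) :
    finner (penalizedLossGrad U X lam V) W =
      -finner (X - U * V) (U * W) + lam * finner (1 - V * Vᵀ) (-(V * Wᵀ + W * Vᵀ)) := by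
  have hfit : finner (Uᵀ * U * V - Uᵀ * X) W = -finner (X - U * V) (U * W) := by
    rw [Matrix.mul_assoc, ← Matrix.mul_sub, finner_mul_left, transpose_transpose,
      ← finner_neg_left, neg_sub]
  have hsym : finner (1 - V * Vᵀ) (V * Wᵀ) = finner (1 - V * Vᵀ) (W * Vᵀ) := by
    rw [← finner_transpose, transpose_mul, transpose_transpose]
    simp [transpose_sub]
  rw [penalizedLossGrad, finner_add_left, finner_smul_left, hfit, finner_neg_right,
    finner_add_right, hsym, ← finner_mul_right, Matrix.sub_mul, Matrix.one_mul]
  simp only [finner_sub_left]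
  ring

lemma penalizedLoss_bregman_eq_quadrature (X : Matrix (Fin m) (Fin n) ℝ) {t₁ t₂ : ℝ}
    (h₁ : t₁ + t₂ = 2 / 3) (h₂ : t₁ * t₂ = 1 / 18) (V V' : Matrix (Fin r) (Fin n) ℝ) :
    penalizedLoss U X lam V' - penalizedLoss U X lam V
        - finner (penalizedLossGrad U X lam V) (V' - V) =
      (finner (penalizedLossHess U lam (V + t₁ • (V' - V)) (V' - V)) (V' - V)
        + finner (penalizedLossHess U lam (V + t₂ • (V' - V)) (V' - V)) (V' - V)) / 4 := by
  obtain ⟨W, rfl⟩ : ∃ W, V' = V + W := ⟨V' - V, by abel⟩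
  rw [add_sub_cancel_left]
  set A : Matrix (Fin r) (Fin r) ℝ := 1 - V * Vᵀ
  set B : Matrix (Fin r) (Fin r) ℝ := -(V * Wᵀ + W * Vᵀ)
  set C : Matrix (Fin r) (Fin r) ℝ := -(W * Wᵀ)
  have hvel (t : ℝ) : B + (2 * t) • C = -((V + t • W) * Wᵀ + W * (V + t • W)ᵀ) := by
    simp only [B, C, transpose_add, transpose_smul, Matrix.add_mul, Matrix.mul_add,
      Matrix.smul_mul, Matrix.mul_smul]
    module
  have hhess (t : ℝ) : finner (penalizedLossHess U lam (V + t • W) W) W =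
      fnormsq (U * W) + lam / 2 * quadCurveSecondDeriv frobeniusForm A B C t := by
    rw [finner_penalizedLossHess, quadCurveSecondDeriv, hvel, one_sub_mul_transpose_add_smul]
    simp only [frobeniusForm_apply, finner_neg_left, finner_neg_right, C]
    unfold fnormsq
    ring
  have hfit : fnormsq (X - U * (V + W)) =
      fnormsq (X - U * V) - 2 * finner (X - U * V) (U * W) + fnormsq (U * W) := by
    rw [Matrix.mul_add, ← sub_sub, sub_eq_add_neg _ (U * W), fnormsq_add]
    simp only [fnormsq, finner_neg_left, finner_neg_right, neg_neg]
    ring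
  have hpen : 1 - (V + W) * (V + W)ᵀ = A + B + C := by
    simpa only [one_smul, one_pow] using one_sub_mul_transpose_add_smul V W 1
  have hquad := bilinForm_bregman_eq_quadrature frobeniusForm finner_comm h₁ h₂ A B C
  simp only [frobeniusForm_apply] at hquad
  rw [penalizedLoss, penalizedLoss, hpen, hfit, finner_penalizedLossGrad, hhess, hhess]
  unfold fnormsq
  linear_combination (lam / 2) * hquad

lemma quarticKernel_bregman_eq_quadrature {t₁ t₂ : ℝ} (h₁ : t₁ + t₂ = 2 / 3)
    (h₂ : t₁ * t₂ = 1 / 18) (V V' : Matrix (Fin r) (Fin n) ℝ) :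
    quarticKernel lam eps V' - quarticKernel lam eps V
        - finner (quarticKernelGrad lam eps V) (V' - V) =
      (finner (quarticKernelHess lam eps (V + t₁ • (V' - V)) (V' - V)) (V' - V)
        + finner (quarticKernelHess lam eps (V + t₂ • (V' - V)) (V' - V)) (V' - V)) / 4 := by
  obtain ⟨W, rfl⟩ : ∃ W, V' = V + W := ⟨V' - V, by abel⟩
  rw [add_sub_cancel_left]
  have hcurve (t : ℝ) :
      fnormsq (V + t • W) = fnormsq V + t * (2 * finner V W) + t ^ 2 * fnormsq W := by
    rw [fnormsq_add]
    simp only [fnormsq, finner_smul_left, finner_smul_right]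
    ring
  have hvel (t : ℝ) : finner (V + t • W) W = finner V W + t * fnormsq W := by
    simp only [finner_add_left, finner_smul_left, fnormsq]
  have hquad := bilinForm_bregman_eq_quadrature (LinearMap.mul ℝ ℝ) mul_comm h₁ h₂
    (fnormsq V) (2 * finner V W) (fnormsq W)
  simp only [quadCurveSecondDeriv, LinearMap.mul_apply', smul_eq_mul] at hquad
  rw [quarticKernel, quarticKernel, quarticKernelGrad, finner_quarticKernelHess,
    finner_quarticKernelHess, hcurve, hcurve, hvel, hvel, fnormsq_add, finner_add_left,
    finner_smul_left, finner_smul_left]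
  linear_combination (6 * lam / 4) * hquad

end Objectives

lemma exists_quadrature_nodes : ∃ t₁ t₂ : ℝ, t₁ + t₂ = 2 / 3 ∧ t₁ * t₂ = 1 / 18 :=
  ⟨1 / 3 - √2 / 6, 1 / 3 + √2 / 6, by ring, by
    linear_combination (-1 / 36) * Real.sq_sqrt (show (0 : ℝ) ≤ 2 by norm_num)⟩

theorem stmt11_general {m n r : ℕ}
    (U : Matrix (Fin m) (Fin r) ℝ) (X : Matrix (Fin m) (Fin n) ℝ) (lam : ℝ) (hlam : 0 < lam)
    (s : ℝ)
    (hs : ∀ u : Fin r → ℝ, u ⬝ᵥ (Uᵀ * U).mulVec u ≤ s * (u ⬝ᵥ u))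
    (eps : ℝ) (heps : eps = max s (2 * lam))
    (f φ₂ : Matrix (Fin r) (Fin n) ℝ → ℝ)
    (hf : ∀ V, f V = (1 / 2) * fnormsq (X - U * V)
        + lam / 2 * fnormsq ((1 : Matrix (Fin r) (Fin r) ℝ) - V * Vᵀ))
    (hφ : ∀ V, φ₂ V = 6 * lam / 4 * (fnormsq V) ^ 2 + eps / 2 * fnormsq V)
    (Hf Hφ : Matrix (Fin r) (Fin n) ℝ → Matrix (Fin r) (Fin n) ℝ → Matrix (Fin r) (Fin n) ℝ)
    (hHf : ∀ V Z, Hf V Z = Uᵀ * U * Z + (2 * lam) • (Z * Vᵀ * V + V * Zᵀ * V + V * Vᵀ * Z - Z))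
    (hHφ : ∀ V Z, Hφ V Z = (6 * lam) • (fnormsq V • Z + (2 * finner V Z) • V) + eps • Z)
    (gradf gradφ : Matrix (Fin r) (Fin n) ℝ → Matrix (Fin r) (Fin n) ℝ)
    (hgradf : ∀ V, gradf V = Uᵀ * U * V - Uᵀ * X + (2 * lam) • (V * Vᵀ * V - V))
    (hgradφ : ∀ V, gradφ V = (6 * lam * fnormsq V) • V + eps • V) :
    (∀ V Z : Matrix (Fin r) (Fin n) ℝ, finner (Hf V Z) Z ≤ finner (Hφ V Z) Z) ∧
    (∀ V Z : Matrix (Fin r) (Fin n) ℝ, 0 ≤ finner (Hf V Z) Z + finner (Hφ V Z) Z) ∧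
    (∀ V V' : Matrix (Fin r) (Fin n) ℝ,
      -(φ₂ V' - φ₂ V - finner (gradφ V) (V' - V)) ≤ f V' - f V - finner (gradf V) (V' - V) ∧
      f V' - f V - finner (gradf V) (V' - V) ≤ φ₂ V' - φ₂ V - finner (gradφ V) (V' - V)) := by
  obtain rfl : f = penalizedLoss U X lam := funext hf
  obtain rfl : φ₂ = quarticKernel lam eps := funext hφ
  obtain rfl : Hf = penalizedLossHess U lam := funext₂ hHf
  obtain rfl : Hφ = quarticKernelHess lam eps := funext₂ hHφ
  obtain rfl : gradf = penalizedLossGrad U X lam := funext hgradf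
  obtain rfl : gradφ = quarticKernelGrad lam eps := funext hgradφ
  have hU (Z : Matrix (Fin r) (Fin n) ℝ) : fnormsq (U * Z) ≤ eps * fnormsq Z :=
    (fnormsq_mul_le_of_dotProduct_le hs Z).trans
      (mul_le_mul_of_nonneg_right (heps ▸ le_max_left _ _) (fnormsq_nonneg Z))
  have h2lam : 2 * lam ≤ eps := heps ▸ le_max_right _ _
  have hle := finner_penalizedLossHess_le hU hlam.le
  have hnonneg :=
    finner_penalizedLossHess_add_quarticKernelHess_nonneg (U := U) (n := n) hlam.le h2lam
  refine ⟨hle, hnonneg, fun V V' => ?_⟩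
  obtain ⟨t₁, t₂, h₁, h₂⟩ := exists_quadrature_nodes
  rw [penalizedLoss_bregman_eq_quadrature X h₁ h₂, quarticKernel_bregman_eq_quadrature h₁ h₂]
  have := hle (V + t₁ • (V' - V)) (V' - V)
  have := hle (V + t₂ • (V' - V)) (V' - V)
  have := hnonneg (V + t₁ • (V' - V)) (V' - V)
  have := hnonneg (V + t₂ • (V' - V)) (V' - V)
  constructor <;> linarith

theorem stmt11 {m n r : ℕ}
    (U : Matrix (Fin m) (Fin r) ℝ) (X : Matrix (Fin m) (Fin n) ℝ) (lam : ℝ) (hlam : 0 < lam)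
    (s : ℝ)
    (hs : ∀ u : Fin r → ℝ, u ⬝ᵥ (Uᵀ * U).mulVec u ≤ s * (u ⬝ᵥ u))
    (hs' : ∃ u : Fin r → ℝ, u ⬝ᵥ (Uᵀ * U).mulVec u = s * (u ⬝ᵥ u) ∧ u ⬝ᵥ u ≠ 0)
    (eps : ℝ) (heps : eps = max s (2 * lam))
    (f φ₂ : Matrix (Fin r) (Fin n) ℝ → ℝ)
    (hf : ∀ V, f V = (1 / 2) * fnormsq (X - U * V)
        + lam / 2 * fnormsq ((1 : Matrix (Fin r) (Fin r) ℝ) - V * Vᵀ))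
    (hφ : ∀ V, φ₂ V = 6 * lam / 4 * (fnormsq V) ^ 2 + eps / 2 * fnormsq V)
    (Hf Hφ : Matrix (Fin r) (Fin n) ℝ → Matrix (Fin r) (Fin n) ℝ → Matrix (Fin r) (Fin n) ℝ)
    (hHf : ∀ V Z, Hf V Z = Uᵀ * U * Z + (2 * lam) • (Z * Vᵀ * V + V * Zᵀ * V + V * Vᵀ * Z - Z))
    (hHφ : ∀ V Z, Hφ V Z = (6 * lam) • (fnormsq V • Z + (2 * finner V Z) • V) + eps • Z)
    (gradf gradφ : Matrix (Fin r) (Fin n) ℝ → Matrix (Fin r) (Fin n) ℝ)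
    (hgradf : ∀ V, gradf V = Uᵀ * U * V - Uᵀ * X + (2 * lam) • (V * Vᵀ * V - V))
    (hgradφ : ∀ V, gradφ V = (6 * lam * fnormsq V) • V + eps • V) :
    (∀ V Z : Matrix (Fin r) (Fin n) ℝ, finner (Hf V Z) Z ≤ finner (Hφ V Z) Z) ∧
    (∀ V Z : Matrix (Fin r) (Fin n) ℝ, 0 ≤ finner (Hf V Z) Z + finner (Hφ V Z) Z) ∧
    (∀ V V' : Matrix (Fin r) (Fin n) ℝ,
      -(φ₂ V' - φ₂ V - finner (gradφ V) (V' - V)) ≤ f V' - f V - finner (gradf V) (V' - V) ∧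
      f V' - f V - finner (gradf V) (V' - V) ≤ φ₂ V' - φ₂ V - finner (gradφ V) (V' - V)) :=
  stmt11_general U X lam hlam s hs eps heps f φ₂ hf hφ Hf Hφ hHf hHφ gradf gradφ hgradf hgradφ
end
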